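/- arXiv:math/0601001 — 3 statements merged into one kernel-verified Lean document; each statement's English description precedes it below -/
import Mathlib

section
/- An algebra extension A over B is left depth two if and only if there exist a positive integer N, elements β₁,…,β_N in End(_B A _B) and elements t₁,…,t_N in (A ⊗_B A)^B such that for all x, y in A, Σᵢ tᵢ · βᵢ(x) · y = x ⊗_B y. -/
open TensorProduct LinearMap

noncomputable section

variable {K : Type*} [CommRing K] {A B : Type*} [Ring A] [Ring B] [Algebra K A] [Algebra K B]

/-- Left multiplication by `a` on the first tensorand of `A ⊗[K] A`. -/
def lmulT (a : A) : A ⊗[K] A →ₗ[K] A ⊗[K] A := rTensor A (mulLeft K a)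

/-- Right multiplication by `a` on the second tensorand of `A ⊗[K] A`. -/
def rmulT (a : A) : A ⊗[K] A →ₗ[K] A ⊗[K] A := lTensor A (mulRight K a)

/-- The relations defining `A ⊗_B A` as a quotient of `A ⊗[K] A`; working modulo
`relJ f` amounts to working in the tensor square `A ⊗_B A` of the extension `f`. -/
def relJ (f : B →ₐ[K] A) : Submodule K (A ⊗[K] A) :=
  Submodule.span K {z | ∃ x b y, z = (x * f b) ⊗ₜ[K] y - x ⊗ₜ[K] (f b * y)}

/-- `α` is a `B`-`B`-bimodule endomorphism of `A`. -/
def IsBB (f : B →ₐ[K] A) (α : A →ₗ[K] A) : Prop :=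
  (∀ b x, α (f b * x) = f b * α x) ∧ (∀ b x, α (x * f b) = α x * f b)

/-- `t` represents a `B`-central element of `A ⊗_B A`. -/
def IsCent (f : B →ₐ[K] A) (t : A ⊗[K] A) : Prop :=
  ∀ b, lmulT (K := K) (f b) t - rmulT (f b) t ∈ relJ f

/-- `A ⊗_B A` is isomorphic, as a `B`-`A`-bimodule, to a direct summand of `A^N`
for some positive `N`: there is a split mono `ι` (with splitting `π`), both maps
being `B`-`A`-bimodule maps (everything taken modulo the relations `relJ f`). -/
def LeftD2 (f : B →ₐ[K] A) : Prop :=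
  ∃ N : ℕ, 0 < N ∧ ∃ (ι : A ⊗[K] A →ₗ[K] (Fin N → A)) (π : (Fin N → A) →ₗ[K] A ⊗[K] A),
    (∀ z ∈ relJ f, ι z = 0) ∧
    (∀ b z, ι (lmulT (f b) z) = fun i => f b * ι z i) ∧
    (∀ a z, ι (rmulT a z) = fun i => ι z i * a) ∧
    (∀ b (v : Fin N → A), π (fun i => f b * v i) - lmulT (f b) (π v) ∈ relJ f) ∧
    (∀ a (v : Fin N → A), π (fun i => v i * a) - rmulT a (π v) ∈ relJ f) ∧
    (∀ z, π (ι z) - z ∈ relJ f)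

/-- `A ⊗_B A` is isomorphic, as an `A`-`B`-bimodule, to a direct summand of `A^N`. -/
def RightD2 (f : B →ₐ[K] A) : Prop :=
  ∃ N : ℕ, 0 < N ∧ ∃ (ι : A ⊗[K] A →ₗ[K] (Fin N → A)) (π : (Fin N → A) →ₗ[K] A ⊗[K] A),
    (∀ z ∈ relJ f, ι z = 0) ∧
    (∀ a z, ι (lmulT a z) = fun i => a * ι z i) ∧
    (∀ b z, ι (rmulT (f b) z) = fun i => ι z i * f b) ∧
    (∀ a (v : Fin N → A), π (fun i => a * v i) - lmulT a (π v) ∈ relJ f) ∧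
    (∀ b (v : Fin N → A), π (fun i => v i * f b) - rmulT (f b) (π v) ∈ relJ f) ∧
    (∀ z, π (ι z) - z ∈ relJ f)

/-- `A ⊗_B A` is isomorphic, as an `A`-`A`-bimodule, to a direct summand of `A^N`:
H-separability of the extension `f`. -/
def HSep (f : B →ₐ[K] A) : Prop :=
  ∃ N : ℕ, 0 < N ∧ ∃ (ι : A ⊗[K] A →ₗ[K] (Fin N → A)) (π : (Fin N → A) →ₗ[K] A ⊗[K] A),
    (∀ z ∈ relJ f, ι z = 0) ∧
    (∀ a z, ι (lmulT a z) = fun i => a * ι z i) ∧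
    (∀ a z, ι (rmulT a z) = fun i => ι z i * a) ∧
    (∀ a (v : Fin N → A), π (fun i => a * v i) - lmulT a (π v) ∈ relJ f) ∧
    (∀ a (v : Fin N → A), π (fun i => v i * a) - rmulT a (π v) ∈ relJ f) ∧
    (∀ z, π (ι z) - z ∈ relJ f)


/-! ### Auxiliary lemmas -/

@[simp] lemma lmulT_tmul (a x y : A) : lmulT (K := K) a (x ⊗ₜ[K] y) = (a * x) ⊗ₜ[K] y := rfl

@[simp] lemma rmulT_tmul (a x y : A) : rmulT (K := K) a (x ⊗ₜ[K] y) = x ⊗ₜ[K] (y * a) := rfl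

lemma relJ_map (f : B →ₐ[K] A) (g : A ⊗[K] A →ₗ[K] A ⊗[K] A)
    (hg : ∀ x b y, g ((x * f b) ⊗ₜ[K] y - x ⊗ₜ[K] (f b * y)) ∈ relJ f)
    {z : A ⊗[K] A} (hz : z ∈ relJ f) : g z ∈ relJ f := by
  induction hz using Submodule.span_induction with
  | mem w hw => obtain ⟨x, b, y, rfl⟩ := hw; exact hg x b y
  | zero => rw [map_zero]; exact Submodule.zero_mem _
  | add u v _ _ h1 h2 => rw [map_add]; exact Submodule.add_mem _ h1 h2
  | smul c u _ h => rw [map_smul]; exact Submodule.smul_mem _ _ h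

lemma relJ_lmulT (f : B →ₐ[K] A) (a : A) {z : A ⊗[K] A} (hz : z ∈ relJ f) :
    lmulT a z ∈ relJ f := by
  refine relJ_map f _ (fun x b y => ?_) hz
  rw [map_sub, lmulT_tmul, lmulT_tmul]
  exact Submodule.subset_span ⟨a * x, b, y, by rw [mul_assoc]⟩

lemma relJ_rmulT (f : B →ₐ[K] A) (a : A) {z : A ⊗[K] A} (hz : z ∈ relJ f) :
    rmulT a z ∈ relJ f := by
  refine relJ_map f _ (fun x b y => ?_) hz
  rw [map_sub, rmulT_tmul, rmulT_tmul]
  exact Submodule.subset_span ⟨x, b, y * a, by rw [mul_assoc]⟩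

lemma rmulT_mul (a b : A) (z : A ⊗[K] A) :
    rmulT (K := K) (a * b) z = rmulT b (rmulT a z) := by
  induction z using TensorProduct.induction_on with
  | zero => simp
  | tmul x y => simp [mul_assoc]
  | add u v h1 h2 => simp only [map_add, h1, h2]

lemma lmulT_rmulT (a b : A) (z : A ⊗[K] A) :
    lmulT (K := K) a (rmulT b z) = rmulT b (lmulT a z) := by
  induction z using TensorProduct.induction_on with
  | zero => simp
  | tmul x y => simp
  | add u v h1 h2 => simp only [map_add, h1, h2]

lemma rmulT_add' (a b : A) (z : A ⊗[K] A) :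
    rmulT (K := K) (a + b) z = rmulT a z + rmulT b z := by
  induction z using TensorProduct.induction_on with
  | zero => simp
  | tmul x y => simp [mul_add, tmul_add]
  | add u v h1 h2 =>
      simp only [map_add, h1, h2]; abel

lemma rmulT_smul' (c : K) (a : A) (z : A ⊗[K] A) :
    rmulT (K := K) (c • a) z = c • rmulT a z := by
  induction z using TensorProduct.induction_on with
  | zero => simp
  | tmul x y => simp [mul_smul_comm]
  | add u v h1 h2 =>
      simp only [map_add, h1, h2, smul_add]

lemma single_one_mul {N : ℕ} (i : Fin N) (a : A) :
    (fun j => (Pi.single i (1 : A) : Fin N → A) j * a) = (Pi.single i a : Fin N → A) := by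
  funext j
  by_cases h : j = i <;> simp [Pi.single_apply, h]

lemma mul_single_one {N : ℕ} (i : Fin N) (a : A) :
    (fun j => a * (Pi.single i (1 : A) : Fin N → A) j) = (Pi.single i a : Fin N → A) := by
  funext j
  by_cases h : j = i <;> simp [Pi.single_apply, h]

/-- An algebra extension `A | B` is left depth two iff there are a positive
integer `N`, `β₁,…,β_N ∈ End(_B A _B)` and `B`-central elements `t₁,…,t_N` of `A ⊗_B A`
such that `Σᵢ tᵢ βᵢ(x) y = x ⊗_B y` for all `x, y ∈ A`. -/
theorem leftD2_iff_quasibases (f : B →ₐ[K] A) :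
    LeftD2 f ↔
      ∃ N : ℕ, 0 < N ∧ ∃ (β : Fin N → (A →ₗ[K] A)) (t : Fin N → A ⊗[K] A),
        (∀ i, IsBB f (β i)) ∧ (∀ i, IsCent f (t i)) ∧
        ∀ x y : A, (∑ i, rmulT (β i x * y) (t i)) - x ⊗ₜ[K] y ∈ relJ f := by
  constructor
  · rintro ⟨N, hN, ι, π, hι0, hιl, hιr, hπl, hπr, hπι⟩
    refine ⟨N, hN,
      fun i => (LinearMap.proj i) ∘ₗ ι ∘ₗ ((TensorProduct.mk K A A).flip 1),
      fun i => π (Pi.single i 1), ?_, ?_, ?_⟩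
    · intro i
      constructor
      · intro b x
        show ι ((f b * x) ⊗ₜ[K] 1) i = f b * ι (x ⊗ₜ[K] 1) i
        calc ι ((f b * x) ⊗ₜ[K] 1) i = ι (lmulT (f b) (x ⊗ₜ[K] 1)) i := by
              rw [lmulT_tmul]
          _ = f b * ι (x ⊗ₜ[K] 1) i := congrFun (hιl b _) i
      · intro b x
        show ι ((x * f b) ⊗ₜ[K] 1) i = ι (x ⊗ₜ[K] 1) i * f b
        have hmem : (x * f b) ⊗ₜ[K] (1 : A) - x ⊗ₜ[K] (f b * 1) ∈ relJ f :=
          Submodule.subset_span ⟨x, b, 1, rfl⟩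
        have h0 := hι0 _ hmem
        rw [map_sub, sub_eq_zero] at h0
        calc ι ((x * f b) ⊗ₜ[K] 1) i = ι (x ⊗ₜ[K] (f b * 1)) i := congrFun h0 i
          _ = ι (rmulT (f b) (x ⊗ₜ[K] 1)) i := by rw [rmulT_tmul, one_mul, mul_one]
          _ = ι (x ⊗ₜ[K] 1) i * f b := congrFun (hιr (f b) _) i
    · intro i b
      show lmulT (f b) (π (Pi.single i 1)) - rmulT (f b) (π (Pi.single i 1)) ∈ relJ f
      have h1 := hπl b (Pi.single i 1)
      have h2 := hπr (f b) (Pi.single i 1)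
      rw [mul_single_one] at h1
      rw [single_one_mul] at h2
      have h4 := Submodule.sub_mem _ h2 h1
      have h5 : (π (Pi.single i (f b)) - rmulT (f b) (π (Pi.single i 1))) -
          (π (Pi.single i (f b)) - lmulT (f b) (π (Pi.single i 1))) =
          lmulT (f b) (π (Pi.single i 1)) - rmulT (f b) (π (Pi.single i 1)) := by abel
      rwa [h5] at h4
    · intro x y
      show (∑ i, rmulT (ι (x ⊗ₜ[K] 1) i * y) (π (Pi.single i 1))) - x ⊗ₜ[K] y ∈ relJ f
      have h1 : ∀ i : Fin N,
          rmulT (ι (x ⊗ₜ[K] 1) i * y) (π (Pi.single i 1)) -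
            rmulT y (π (Pi.single i (ι (x ⊗ₜ[K] 1) i))) ∈ relJ f := by
        intro i
        have h := hπr (ι (x ⊗ₜ[K] 1) i) (Pi.single i 1)
        rw [single_one_mul] at h
        have h' := relJ_rmulT f y h
        rw [map_sub] at h'
        have h'' := Submodule.neg_mem _ h'
        rw [neg_sub] at h''
        rwa [← rmulT_mul] at h''
      have hs : ∑ i, rmulT y (π (Pi.single i (ι (x ⊗ₜ[K] 1) i))) =
          rmulT y (π (ι (x ⊗ₜ[K] 1))) := by
        rw [← map_sum, ← map_sum, Finset.univ_sum_single]
      have h2 : rmulT y (π (ι (x ⊗ₜ[K] 1))) - x ⊗ₜ[K] y ∈ relJ f := by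
        have h := relJ_rmulT f y (hπι (x ⊗ₜ[K] 1))
        rwa [map_sub, rmulT_tmul, one_mul] at h
      have key : (∑ i, rmulT (ι (x ⊗ₜ[K] 1) i * y) (π (Pi.single i 1))) - x ⊗ₜ[K] y =
          (∑ i, (rmulT (ι (x ⊗ₜ[K] 1) i * y) (π (Pi.single i 1)) -
            rmulT y (π (Pi.single i (ι (x ⊗ₜ[K] 1) i))))) +
          (rmulT y (π (ι (x ⊗ₜ[K] 1))) - x ⊗ₜ[K] y) := by
        rw [Finset.sum_sub_distrib, hs]; abel
      rw [key]
      exact Submodule.add_mem _ (Submodule.sum_mem _ fun i _ => h1 i) h2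
  · rintro ⟨N, hN, β, t, hβ, ht, hmain⟩
    let ι : A ⊗[K] A →ₗ[K] (Fin N → A) :=
      LinearMap.pi (fun i => LinearMap.mul' K A ∘ₗ rTensor A (β i))
    let π : (Fin N → A) →ₗ[K] A ⊗[K] A :=
      { toFun := fun v => ∑ i, rmulT (v i) (t i)
        map_add' := fun u v => by
          simp only [Pi.add_apply, rmulT_add', Finset.sum_add_distrib]
        map_smul' := fun c v => by
          simp only [Pi.smul_apply, rmulT_smul', Finset.smul_sum, RingHom.id_apply] }
    have hι : ∀ (x y : A) (i : Fin N), ι (x ⊗ₜ[K] y) i = β i x * y := fun x y i => rfl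
    have hπ : ∀ v, π v = ∑ i, rmulT (v i) (t i) := fun v => rfl
    refine ⟨N, hN, ι, π, ?_, ?_, ?_, ?_, ?_, ?_⟩
    · intro z hz
      induction hz using Submodule.span_induction with
      | mem w hw =>
          obtain ⟨x, b, y, rfl⟩ := hw
          funext i
          rw [map_sub]
          simp only [Pi.sub_apply, Pi.zero_apply, hι]
          rw [(hβ i).2, mul_assoc, sub_self]
      | zero => exact map_zero ι
      | add u v _ _ h1 h2 => rw [map_add, h1, h2, add_zero]
      | smul c u _ h => rw [map_smul, h, smul_zero]
    · intro b z
      induction z using TensorProduct.induction_on with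
      | zero => funext i; simp
      | tmul x y => funext i; rw [lmulT_tmul, hι, hι, (hβ i).1, mul_assoc]
      | add u v h1 h2 => funext i; simp only [map_add, Pi.add_apply, h1, h2, mul_add]
    · intro a z
      induction z using TensorProduct.induction_on with
      | zero => funext i; simp
      | tmul x y => funext i; rw [rmulT_tmul, hι, hι, mul_assoc]
      | add u v h1 h2 => funext i; simp only [map_add, Pi.add_apply, h1, h2, add_mul]
    · intro b v
      have e : π (fun i => f b * v i) - lmulT (f b) (π v) =
          ∑ i, rmulT (v i) (rmulT (f b) (t i) - lmulT (f b) (t i)) := by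
        rw [hπ, hπ, map_sum, ← Finset.sum_sub_distrib]
        exact Finset.sum_congr rfl fun i _ => by
          rw [map_sub, rmulT_mul, lmulT_rmulT]
      rw [e]
      refine Submodule.sum_mem _ fun i _ => relJ_rmulT f (v i) ?_
      have h := Submodule.neg_mem _ (ht i b)
      rwa [neg_sub] at h
    · intro a v
      have e : π (fun i => v i * a) = rmulT a (π v) := by
        rw [hπ, hπ, map_sum]
        exact Finset.sum_congr rfl fun i _ => rmulT_mul (v i) a (t i)
      rw [e, sub_self]
      exact Submodule.zero_mem _
    · intro z
      induction z using TensorProduct.induction_on with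
      | zero => simpa using Submodule.zero_mem _
      | tmul x y =>
          have e : π (ι (x ⊗ₜ[K] y)) = ∑ i, rmulT (β i x * y) (t i) := by
            rw [hπ]
            exact Finset.sum_congr rfl fun i _ => by rw [hι]
          rw [e]
          exact hmain x y
      | add u v h1 h2 =>
          have e : π (ι (u + v)) - (u + v) = (π (ι u) - u) + (π (ι v) - v) := by
            rw [map_add, map_add]; abel
          rw [e]
          exact Submodule.add_mem _ h1 h2

end
end

section
/- If A over B is a left depth two extension, then S = End(_B A _B) is a finitely generated projective left module over the centralizer R = V_A(B), where R acts by r · α = λ_r ∘ α (left multiplication by r composed with α). -/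
open TensorProduct LinearMap

noncomputable section

variable {K : Type*} [CommRing K] {A B : Type*} [Ring A] [Ring B] [Algebra K A] [Algebra K B]

variable (f : B →ₐ[K] A)

/-- `S = End(_B A _B)` as a left module over the centralizer `R = V_A(B)`,
where `r • α = λ_r ∘ α`. -/
def SSub : Submodule ↥(Subalgebra.centralizer K (Set.range f)) (A →ₗ[K] A) where
  carrier := {α | IsBB f α}
  add_mem' := by
    rintro α β ⟨hα1, hα2⟩ ⟨hβ1, hβ2⟩
    exact ⟨fun b x => by simp [hα1 b x, hβ1 b x, mul_add],
           fun b x => by simp [hα2 b x, hβ2 b x, add_mul]⟩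
  zero_mem' := ⟨fun b x => by simp, fun b x => by simp⟩
  smul_mem' := by
    rintro r α ⟨hα1, hα2⟩
    constructor
    · intro b x
      have hc : (r : A) * f b = f b * (r : A) :=
        (r.2 (f b) ⟨b, rfl⟩).symm
      show (r : A) • α (f b * x) = f b * ((r : A) • α x)
      simp only [smul_eq_mul, hα1 b x, ← mul_assoc, hc]
    · intro b x
      show (r : A) • α (x * f b) = ((r : A) • α x) * f b
      simp only [smul_eq_mul, hα2 b x, mul_assoc]

/-! ### Auxiliary material for the proof -/

/-- The map `x ⊗ y ↦ α x * y`. -/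
def gmap (α : A →ₗ[K] A) : A ⊗[K] A →ₗ[K] A :=
  (LinearMap.mul' K A) ∘ₗ (rTensor A α)

lemma gmap_tmul (α : A →ₗ[K] A) (x y : A) : gmap α (x ⊗ₜ[K] y) = α x * y := rfl

lemma gmap_relJ {α : A →ₗ[K] A} (hα : IsBB f α) {z : A ⊗[K] A} (hz : z ∈ relJ f) :
    gmap α z = 0 := by
  have hle : relJ f ≤ ker (gmap α) := by
    rw [relJ, Submodule.span_le]
    rintro _ ⟨x, b, y, rfl⟩
    simp only [SetLike.mem_coe, mem_ker, map_sub, gmap_tmul, hα.2 b x, mul_assoc, sub_self]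
  exact hle hz

lemma gmap_rmulT (α : A →ₗ[K] A) (c : A) (z : A ⊗[K] A) :
    gmap α (rmulT c z) = gmap α z * c := by
  induction z using TensorProduct.induction_on with
  | zero => simp
  | tmul x y => simp [rmulT, gmap_tmul, mul_assoc]
  | add u v hu hv => simp only [map_add, hu, hv, add_mul]

lemma gmap_lmulT {α : A →ₗ[K] A} (hα : IsBB f α) (b : B) (z : A ⊗[K] A) :
    gmap α (lmulT (f b) z) = f b * gmap α z := by
  induction z using TensorProduct.induction_on with
  | zero => simp
  | tmul x y => simp [lmulT, gmap_tmul, hα.1 b x, mul_assoc]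
  | add u v hu hv => simp only [map_add, hu, hv, mul_add]

lemma gmap_smulA (c : A) (α : A →ₗ[K] A) (z : A ⊗[K] A) :
    gmap (c • α) z = c * gmap α z := by
  induction z using TensorProduct.induction_on with
  | zero => simp
  | tmul x y => simp [gmap_tmul, mul_assoc]
  | add u v hu hv => simp only [map_add, hu, hv, mul_add]

lemma gmap_add (α β : A →ₗ[K] A) (z : A ⊗[K] A) :
    gmap (α + β) z = gmap α z + gmap β z := by
  simp [gmap, rTensor_add]

/-- The standard basis vector of `A^N`. -/
def stdB (N : ℕ) (i : Fin N) : Fin N → A := fun j => if j = i then 1 else 0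

/-- The map `a ↦ ι (a ⊗ 1) i`. -/
def gam {N : ℕ} (ι : A ⊗[K] A →ₗ[K] (Fin N → A)) (i : Fin N) : A →ₗ[K] A :=
  (LinearMap.proj i) ∘ₗ ι ∘ₗ ((TensorProduct.mk K A A).flip 1)

lemma gam_apply {N : ℕ} (ι : A ⊗[K] A →ₗ[K] (Fin N → A)) (i : Fin N) (a : A) :
    gam ι i a = ι (a ⊗ₜ[K] 1) i := rfl

set_option maxHeartbeats 1000000 in
set_option synthInstance.maxHeartbeats 200000 in
/-- if `A | B` is left depth two, then `S = End(_B A _B)` is a finitely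
generated projective left module over the centralizer `R = V_A(B)` (acting by
`r • α = λ_r ∘ α`). -/
theorem leftD2_S_finite_projective (h : LeftD2 f) :
    Module.Finite ↥(Subalgebra.centralizer K (Set.range f)) ↥(SSub f) ∧
      Module.Projective ↥(Subalgebra.centralizer K (Set.range f)) ↥(SSub f) := by
  obtain ⟨N, -, ι, π, hker, hlι, hrι, hlπ, hrπ, hsplit⟩ := h
  -- the "quasibasis" elements of `A ⊗_B A`
  set t : Fin N → A ⊗[K] A := fun i => π (stdB N i) with ht
  -- each `t i` is `B`-central
  have hcentT : ∀ (b : B) (i : Fin N),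
      lmulT (f b) (t i) - rmulT (f b) (t i) ∈ relJ f := by
    intro b i
    have he : (fun j => f b * stdB N i j) = fun j => stdB N i j * f b := by
      funext j
      by_cases hji : j = i <;> simp [stdB, hji]
    have key : lmulT (f b) (t i) - rmulT (f b) (t i)
        = (π (fun j => stdB N i j * f b) - rmulT (f b) (π (stdB N i)))
          - (π (fun j => f b * stdB N i j) - lmulT (f b) (π (stdB N i))) := by
      rw [he, ht]; abel
    rw [key]
    exact sub_mem (hrπ _ _) (hlπ _ _)
  -- `γ i` are elements of `S`
  have hgam : ∀ i : Fin N, gam ι i ∈ SSub f := by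
    intro i
    constructor
    · intro b x
      have h1 : (f b * x) ⊗ₜ[K] (1 : A) = lmulT (f b) (x ⊗ₜ[K] 1) := by
        simp [lmulT]
      rw [gam_apply, gam_apply, h1, hlι]
    · intro b x
      have h1 : (x * f b) ⊗ₜ[K] (1 : A) - x ⊗ₜ[K] (f b * 1) ∈ relJ f :=
        Submodule.subset_span ⟨x, b, 1, rfl⟩
      have h2 : ι ((x * f b) ⊗ₜ[K] (1 : A)) = ι (x ⊗ₜ[K] (f b * 1)) := by
        have := hker _ h1
        rw [map_sub, sub_eq_zero] at this
        exact this
      have h3 : x ⊗ₜ[K] (f b * 1) = rmulT (f b) (x ⊗ₜ[K] (1 : A)) := by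
        simp [rmulT]
      rw [gam_apply, gam_apply, h2, h3, hrι]
  set γ : Fin N → ↥(SSub f) := fun i => ⟨gam ι i, hgam i⟩ with hγ
  -- decomposition of any element of the tensor square through the quasibases
  have hdecomp : ∀ z : A ⊗[K] A, z - ∑ i, rmulT (ι z i) (t i) ∈ relJ f := by
    intro z
    have h3 : π (ι z) = ∑ i, π (fun j => stdB N i j * ι z i) := by
      rw [← map_sum]
      congr 1
      funext j
      rw [Finset.sum_apply]
      simp [stdB, ite_mul]
    have key : z - ∑ i, rmulT (ι z i) (t i)
        = (∑ i, (π (fun j => stdB N i j * ι z i) - rmulT (ι z i) (t i)))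
          - (π (ι z) - z) := by
      rw [Finset.sum_sub_distrib, ← h3]; abel
    rw [key]
    exact sub_mem (Submodule.sum_mem _ fun i _ => hrπ _ _) (hsplit z)
  -- centrality of `gmap α (t i)` for `α ∈ S`
  have hcent : ∀ (α : ↥(SSub f)) (i : Fin N), gmap (α : A →ₗ[K] A) (t i) ∈ Subalgebra.centralizer K (Set.range f) := by
    intro α i
    rw [Subalgebra.mem_centralizer_iff]
    rintro _ ⟨b, rfl⟩
    have h1 : gmap (α : A →ₗ[K] A) (lmulT (f b) (t i)) =
        gmap (α : A →ₗ[K] A) (rmulT (f b) (t i)) := by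
      have := gmap_relJ f α.2 (hcentT b i)
      rw [map_sub, sub_eq_zero] at this
      exact this
    calc f b * gmap (α : A →ₗ[K] A) (t i)
        = gmap (α : A →ₗ[K] A) (lmulT (f b) (t i)) := (gmap_lmulT f α.2 b _).symm
      _ = gmap (α : A →ₗ[K] A) (rmulT (f b) (t i)) := h1
      _ = gmap (α : A →ₗ[K] A) (t i) * f b := gmap_rmulT _ _ _
  -- the key quasibasis formula
  have hkey : ∀ (α : ↥(SSub f)) (a : A),
      (α : A →ₗ[K] A) a = ∑ i, gmap (α : A →ₗ[K] A) (t i) * gam ι i a := by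
    intro α a
    have h1 := gmap_relJ f α.2 (hdecomp (a ⊗ₜ[K] 1))
    rw [map_sub, sub_eq_zero, map_sum] at h1
    have h2 : gmap (α : A →ₗ[K] A) (a ⊗ₜ[K] (1 : A)) = (α : A →ₗ[K] A) a := by
      rw [gmap_tmul, mul_one]
    rw [← h2, h1]
    exact Finset.sum_congr rfl fun i _ => by rw [gmap_rmulT, gam_apply]
  -- the splitting maps
  set φ : ↥(SSub f) →ₗ[↥(Subalgebra.centralizer K (Set.range f))] (Fin N → ↥(Subalgebra.centralizer K (Set.range f))) :=
    { toFun := fun α => fun i => ⟨gmap (α : A →ₗ[K] A) (t i), hcent α i⟩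
      map_add' := fun α β => by
        funext i
        apply Subtype.ext
        show gmap ((α : A →ₗ[K] A) + (β : A →ₗ[K] A)) (t i) = _
        rw [gmap_add]
        rfl
      map_smul' := fun r α => by
        funext i
        apply Subtype.ext
        show gmap ((r : A) • (α : A →ₗ[K] A)) (t i) = (r : A) * gmap (α : A →ₗ[K] A) (t i)
        rw [gmap_smulA] } with hφ
  set ψ : (Fin N → ↥(Subalgebra.centralizer K (Set.range f))) →ₗ[↥(Subalgebra.centralizer K (Set.range f))] ↥(SSub f) :=
    { toFun := fun v => ∑ i, v i • γ i
      map_add' := fun v w => by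
        simp [add_smul, Finset.sum_add_distrib]
      map_smul' := fun r v => by
        simp [mul_smul, Finset.smul_sum] } with hψ
  have hψφ : ∀ α : ↥(SSub f), ψ (φ α) = α := by
    intro α
    apply Subtype.ext
    apply LinearMap.ext
    intro a
    have hcoe : ((ψ (φ α) : ↥(SSub f)) : A →ₗ[K] A) a
        = ∑ i, gmap (α : A →ₗ[K] A) (t i) * gam ι i a := by
      show ((∑ i, (⟨gmap (α : A →ₗ[K] A) (t i), hcent α i⟩ : ↥(Subalgebra.centralizer K (Set.range f))) • γ i
          : ↥(SSub f)) : A →ₗ[K] A) a = _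
      rw [AddSubmonoidClass.coe_finset_sum, LinearMap.sum_apply]
      rfl
    rw [hcoe, hkey]
  constructor
  · exact Module.Finite.of_surjective ψ fun α => ⟨φ α, hψφ α⟩
  · exact Module.Projective.of_split φ ψ (LinearMap.ext hψφ)

end
end

section
/- The extension T_n(k) over Diag_n(k) of upper triangular matrices over the diagonal matrices (n ≥ 2) is not depth two: the centralizer of Diag_n(k) in T_n(k) equals Diag_n(k) and is not a normal subalgebra of T_n(k), since the two-sided ideal I = Σᵢ k e_{1i} of T_n(k) satisfies C(I ∩ B) ≠ (I ∩ B)C. -/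
open TensorProduct LinearMap

noncomputable section

variable {K : Type*} [CommRing K] {A B : Type*} [Ring A] [Ring B] [Algebra K A] [Algebra K B]

open Matrix

/-- The subalgebra of upper triangular `n × n` matrices. -/
def upperTriangular (k : Type*) [CommRing k] (n : ℕ) :
    Subalgebra k (Matrix (Fin n) (Fin n) k) where
  carrier := {M | M.BlockTriangular (_root_.id : Fin n → Fin n)}
  add_mem' ha hb := ha.add hb
  mul_mem' ha hb := ha.mul hb
  algebraMap_mem' r := by
    show Matrix.BlockTriangular (Matrix.diagonal fun _ => r) (_root_.id : Fin n → Fin n)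
    exact Matrix.blockTriangular_diagonal _

/-- The subalgebra of diagonal `n × n` matrices. -/
def diagonalSub (k : Type*) [CommRing k] (n : ℕ) :
    Subalgebra k (Matrix (Fin n) (Fin n) k) where
  carrier := {M | ∀ i j, i ≠ j → M i j = 0}
  add_mem' := by
    intro M N hM hN i j hij
    show M i j + N i j = 0
    rw [hM i j hij, hN i j hij, add_zero]
  mul_mem' := by
    intro M N hM hN i j hij
    show ∑ l, M i l * N l j = 0
    refine Finset.sum_eq_zero fun l _ => ?_
    rcases eq_or_ne i l with rfl | h
    · rw [hN i j hij, mul_zero]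
    · rw [hM i l h, zero_mul]
  algebraMap_mem' r := by
    intro i j hij
    show Matrix.diagonal (fun _ => r) i j = 0
    exact Matrix.diagonal_apply_ne _ hij

theorem diagonal_le_upperTriangular (k : Type*) [CommRing k] (n : ℕ) :
    diagonalSub k n ≤ upperTriangular k n := by
  intro M hM
  intro i j hij
  exact hM i j (ne_of_lt hij).symm

/-!
The centralizer of the diagonal matrices `B` in `C = T_n(k)` is `B`, and `I ∩ B = k e₀₀` for the
first-row ideal `I`. Sandwiching with `e₀₀`, which commutes with `B`, gives a `C`-bimodule map
`C ⊗_B C → C`, `x ⊗ y ↦ x e₀₀ y`, with values in `I`. If `C` were right depth two over `B`, every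
value of such a map would lie in `C (I ∩ B)`; but `1 ⊗ e₀₁ ↦ e₀₁ ∈ (I ∩ B) C`, while every matrix
in `C (I ∩ B)` has zero second column.
-/

namespace Matrix

section Rows

def rowSubmodule (R : Type*) [Semiring R] {m : Type*} (n : Type*) (i : m) :
    Submodule R (Matrix m n R) where
  carrier := {M | ∀ p ≠ i, ∀ q, M p q = 0}
  add_mem' hM hN p hp q := by simp [hM p hp q, hN p hp q]
  zero_mem' _ _ _ := rfl
  smul_mem' c M hM p hp q := by simp [hM p hp q]

variable {R : Type*} [Semiring R] {m n : Type*}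

theorem single_mem_rowSubmodule [DecidableEq m] [DecidableEq n] (i : m) (j : n) (c : R) :
    single i j c ∈ rowSubmodule R n i := fun _ hp _ =>
  single_apply_of_row_ne hp.symm _ _ _

theorem span_single_row_eq_rowSubmodule [Fintype n] [DecidableEq m] [DecidableEq n] (i : m) :
    Submodule.span R {M : Matrix m n R | ∃ j, M = single i j 1} = rowSubmodule R n i := by
  refine le_antisymm (Submodule.span_le.2 ?_) fun M hM => ?_
  · rintro _ ⟨j, rfl⟩
    exact single_mem_rowSubmodule i j 1
  · have hM_eq : M = ∑ j, M i j • single i j (1 : R) := by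
      ext p q
      by_cases hp : p = i
      · subst hp
        simp [Matrix.sum_apply, single_apply]
      · simp [Matrix.sum_apply, Ne.symm hp, hM p hp]
    rw [hM_eq]
    exact Submodule.sum_mem _ fun j _ => Submodule.smul_mem _ _ (Submodule.subset_span ⟨j, rfl⟩)

variable [Fintype m]

theorem mul_mem_rowSubmodule {i : m} {M : Matrix m m R} (hM : M ∈ rowSubmodule R m i)
    (N : Matrix m m R) : M * N ∈ rowSubmodule R m i := fun p hp q => by
  simp [mul_apply, hM p hp]

theorem mul_mem_rowSubmodule_of_col_eq_zero {i : m} {C M : Matrix m m R}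
    (hC : ∀ p ≠ i, C p i = 0) (hM : M ∈ rowSubmodule R m i) : C * M ∈ rowSubmodule R m i :=
  fun p hp q => by
    rw [mul_apply, Finset.sum_eq_single i (fun l _ hl => by simp [hM l hl]) (by simp)]
    simp [hC p hp]

end Rows

theorem isDiag_single {ι R : Type*} [DecidableEq ι] [Zero R] (i : ι) (c : R) :
    (single i i c).IsDiag :=
  diagonal_single i c ▸ isDiag_diagonal _

theorem isDiag_iff_forall_commute {ι R : Type*} [Fintype ι] [DecidableEq ι] [CommSemiring R]
    {M : Matrix ι ι R} : (∀ D : Matrix ι ι R, D.IsDiag → Commute D M) ↔ M.IsDiag := by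
  refine ⟨fun h i j hij => ?_, fun hM D hD => ?_⟩
  · exact row_eq_zero_of_commute_single (h _ (isDiag_single i 1)) hij.symm
  · rw [← hD.diagonal_diag, ← hM.diagonal_diag]
    exact commute_diagonal _ _

theorem col_eq_zero_of_mem_mul {ι R : Type*} [Fintype ι] [DecidableEq ι] [CommSemiring R]
    {P Q : Submodule R (Matrix ι ι R)} {j : ι} (hQ : ∀ N ∈ Q, ∀ l, N l j = 0) {M : Matrix ι ι R}
    (hM : M ∈ P * Q) (p : ι) : M p j = 0 :=
  Submodule.mul_induction_on (C := fun M : Matrix ι ι R => M p j = 0) hM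
    (fun _ _ N hN => by simp [mul_apply, hQ N hN]) (fun _ _ hA hB => by simp [hA, hB])

end Matrix

def sandwich (r : A) : A ⊗[K] A →ₗ[K] A :=
  LinearMap.mul' K A ∘ₗ rTensor A (mulRight K r)

@[simp]
theorem sandwich_tmul (r x y : A) : sandwich (K := K) r (x ⊗ₜ y) = x * r * y := by
  simp [sandwich]

theorem sandwich_lmulT (r a : A) (z : A ⊗[K] A) :
    sandwich r (lmulT a z) = a * sandwich r z := by
  induction z using TensorProduct.induction_on with
  | zero => simp
  | tmul x y => simp [lmulT, mul_assoc]
  | add u w hu hw => simp only [map_add, hu, hw, mul_add]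

theorem sandwich_rmulT (r a : A) (z : A ⊗[K] A) :
    sandwich r (rmulT a z) = sandwich r z * a := by
  induction z using TensorProduct.induction_on with
  | zero => simp
  | tmul x y => simp [rmulT, mul_assoc]
  | add u w hu hw => simp only [map_add, hu, hw, add_mul]

theorem relJ_le_ker_sandwich {f : B →ₐ[K] A} {r : A} (hr : ∀ b, Commute (f b) r) :
    relJ f ≤ ker (sandwich r) := by
  refine Submodule.span_le.2 ?_
  rintro _ ⟨x, b, y, rfl⟩
  simp [mul_assoc, (hr b).eq]

/-- Writing `ι z = ∑ⱼ (ι z)ⱼ • eⱼ` gives `φ z = ∑ⱼ (ι z)ⱼ * φ (π eⱼ)`, and each `φ (π eⱼ)` is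
`B`-central because `eⱼ` is. -/
theorem RightD2.apply_mem_top_mul {f : B →ₐ[K] A} (hf : RightD2 f) {φ : A ⊗[K] A →ₗ[K] A}
    (hJ : relJ f ≤ ker φ) (hl : ∀ a z, φ (lmulT a z) = a * φ z)
    (hr : ∀ b z, φ (rmulT (f b) z) = φ z * f b) (z : A ⊗[K] A) :
    φ z ∈ (⊤ : Submodule K A) *
      (range φ ⊓ Subalgebra.toSubmodule (Subalgebra.centralizer K (Set.range f))) := by
  obtain ⟨N, -, ι, π, -, -, -, hπl, hπr, hπι⟩ := hf
  have hφ_eq {x y} (h : x - y ∈ relJ f) : φ x = φ y := sub_eq_zero.1 (by simpa using hJ h)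
  have hφπl (a : A) (v : Fin N → A) : φ (π fun i => a * v i) = a * φ (π v) := by
    rw [hφ_eq (hπl a v), hl]
  have hφπr (b : B) (v : Fin N → A) : φ (π fun i => v i * f b) = φ (π v) * f b := by
    rw [hφ_eq (hπr b v), hr]
  let e (j : Fin N) : Fin N → A := Pi.single j 1
  have hιz : ι z = ∑ j, fun i => ι z j * e j i := by
    ext i
    simp [e, Pi.single_apply]
  have hcent (j : Fin N) : φ (π (e j)) ∈ Subalgebra.centralizer K (Set.range f) := by
    rintro _ ⟨b, rfl⟩
    have hcomm : (fun i => f b * e j i) = fun i => e j i * f b := by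
      ext i
      simp [e, Pi.single_apply]
    rw [← hφπl, hcomm, hφπr]
  rw [← hφ_eq (hπι z), hιz, map_sum, map_sum]
  refine Submodule.sum_mem _ fun j _ => ?_
  rw [hφπl]
  exact Submodule.mul_mem_mul Submodule.mem_top ⟨mem_range_self φ _, hcent j⟩

section Triangular

variable {k : Type*} [CommRing k] {n : ℕ}

theorem mem_diagonalSub_iff {M : Matrix (Fin n) (Fin n) k} : M ∈ diagonalSub k n ↔ M.IsDiag :=
  Iff.rfl

theorem single_mem_upperTriangular {i j : Fin n} (hij : i ≤ j) (c : k) :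
    single i j c ∈ upperTriangular k n := by
  intro p q (hqp : q < p)
  apply Matrix.single_apply_of_ne
  rintro ⟨rfl, rfl⟩
  exact hqp.not_ge hij

theorem apply_zero_eq_zero_of_mem_upperTriangular [NeZero n] {C : Matrix (Fin n) (Fin n) k}
    (hC : C ∈ upperTriangular k n) {p : Fin n} (hp : p ≠ 0) : C p 0 = 0 :=
  hC (show (0 : Fin n) < p from (Fin.pos_iff_ne_zero' p).2 hp)

theorem rowSubmodule_zero_le_upperTriangular [NeZero n] :
    rowSubmodule k (Fin n) 0 ≤ Subalgebra.toSubmodule (upperTriangular k n) :=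
  fun _ hM p _ hqp => hM p ((Fin.pos_iff_ne_zero' p).1 ((Fin.zero_le _).trans_lt hqp)) _

theorem single_zero_mem_inf_mul [NeZero n] (j : Fin n) :
    single 0 j (1 : k) ∈ (rowSubmodule k (Fin n) 0 ⊓ Subalgebra.toSubmodule (diagonalSub k n)) *
      Subalgebra.toSubmodule (upperTriangular k n) := by
  simpa using Submodule.mul_mem_mul
    (Submodule.mem_inf.2 ⟨single_mem_rowSubmodule 0 0 1, isDiag_single (0 : Fin n) (1 : k)⟩)
    ((Subalgebra.mem_toSubmodule _).2 (single_mem_upperTriangular (Fin.zero_le j) (1 : k)))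

theorem single_zero_notMem_mul_inf [Nontrivial k] [NeZero n] {j : Fin n} (hj : j ≠ 0) :
    single 0 j (1 : k) ∉ Subalgebra.toSubmodule (upperTriangular k n) *
      (rowSubmodule k (Fin n) 0 ⊓ Subalgebra.toSubmodule (diagonalSub k n)) := by
  intro h
  have hcol : ∀ N ∈ rowSubmodule k (Fin n) 0 ⊓ Subalgebra.toSubmodule (diagonalSub k n),
      ∀ l, N l j = 0 := by
    rintro N ⟨hrow, hdiag⟩ l
    by_cases hl : l = 0
    · exact hl ▸ hdiag 0 j hj.symm
    · exact hrow l hl j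
  simpa using col_eq_zero_of_mem_mul hcol h 0

theorem sandwich_mem_rowSubmodule_zero [NeZero n] {r : upperTriangular k n}
    (hr : (r : Matrix (Fin n) (Fin n) k) ∈ rowSubmodule k (Fin n) 0)
    (w : upperTriangular k n ⊗[k] upperTriangular k n) :
    (sandwich r w : Matrix (Fin n) (Fin n) k) ∈ rowSubmodule k (Fin n) 0 := by
  induction w using TensorProduct.induction_on with
  | zero => simp
  | tmul x y =>
    rw [sandwich_tmul]
    exact mul_mem_rowSubmodule (mul_mem_rowSubmodule_of_col_eq_zero
      (fun _ hp => apply_zero_eq_zero_of_mem_upperTriangular x.2 hp) hr) y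
  | add u w hu hw => simpa using add_mem hu hw

theorem coe_mem_diagonalSub_of_mem_centralizer {x : upperTriangular k n}
    (hx : x ∈ Subalgebra.centralizer k
      (Set.range (Subalgebra.inclusion (diagonal_le_upperTriangular k n)))) :
    (x : Matrix (Fin n) (Fin n) k) ∈ diagonalSub k n := by
  rw [mem_diagonalSub_iff, ← isDiag_iff_forall_commute]
  exact fun D hD => congrArg Subtype.val (hx _ ⟨⟨D, hD⟩, rfl⟩)

theorem not_rightD2_upperTriangular [Nontrivial k] [NeZero n] (hn : 2 ≤ n) :
    ¬ RightD2 (Subalgebra.inclusion (diagonal_le_upperTriangular k n)) := by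
  intro hR
  let j : Fin n := ⟨1, hn⟩
  have hj : j ≠ 0 := Fin.ne_of_val_ne one_ne_zero
  let r : upperTriangular k n := ⟨single 0 0 1, single_mem_upperTriangular le_rfl 1⟩
  let a : upperTriangular k n := ⟨single 0 j 1, single_mem_upperTriangular (Fin.zero_le j) 1⟩
  have hr : ∀ b, Commute (Subalgebra.inclusion (diagonal_le_upperTriangular k n) b) r :=
    fun b => Subtype.ext (isDiag_iff_forall_commute.2 (isDiag_single 0 1) _ b.2)
  have hmem := hR.apply_mem_top_mul (relJ_le_ker_sandwich hr) (sandwich_lmulT r)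
    (fun _ => sandwich_rmulT r _) (1 ⊗ₜ[k] a)
  replace hmem := Submodule.mem_map_of_mem (f := (upperTriangular k n).val.toLinearMap) hmem
  have hra :
      (upperTriangular k n).val.toLinearMap (sandwich r (1 ⊗ₜ[k] a)) = single 0 j (1 : k) := by
    simp [r, a]
  rw [hra, Submodule.map_mul] at hmem
  have hleft : Submodule.map (upperTriangular k n).val.toLinearMap ⊤ ≤
      Subalgebra.toSubmodule (upperTriangular k n) := by
    rintro _ ⟨x, -, rfl⟩
    exact x.2
  have hright : Submodule.map (upperTriangular k n).val.toLinearMap (range (sandwich r) ⊓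
      Subalgebra.toSubmodule (Subalgebra.centralizer k
        (Set.range (Subalgebra.inclusion (diagonal_le_upperTriangular k n))))) ≤
      rowSubmodule k (Fin n) 0 ⊓ Subalgebra.toSubmodule (diagonalSub k n) := by
    rintro _ ⟨x, ⟨⟨w, rfl⟩, hx⟩, rfl⟩
    exact ⟨sandwich_mem_rowSubmodule_zero (single_mem_rowSubmodule 0 0 1) w,
      coe_mem_diagonalSub_of_mem_centralizer hx⟩
  exact single_zero_notMem_mul_inf hj (mul_le_mul' hleft hright hmem)

end Triangular

/-- the extension `T_n(k) | Diag_n(k)` (`n ≥ 2`) is not depth two: the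
centralizer of `Diag_n(k)` in `T_n(k)` equals `Diag_n(k)`, which is not a normal
subalgebra of `T_n(k)` since the two-sided ideal `I = Σᵢ k·e_{1i}` of `T_n(k)`
satisfies `C(I ∩ B) ≠ (I ∩ B)C`. -/
theorem triangular_over_diagonal_not_d2 (k : Type*) [Field k] (n : ℕ) [NeZero n]
    (hn : 2 ≤ n) :
    letI C' := upperTriangular k n
    letI B' := diagonalSub k n
    letI I : Submodule k (Matrix (Fin n) (Fin n) k) :=
      Submodule.span k {M | ∃ i : Fin n, M = Matrix.single 0 i (1 : k)}
    -- the centralizer of `B` in `C` is `B` itself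
    ((∀ x ∈ C', ((∀ b ∈ B', b * x = x * b) ↔ x ∈ B')) ∧
    -- `I` is a two-sided ideal of `C` contained in `C`
    (I ≤ Subalgebra.toSubmodule C' ∧
      ∀ c ∈ C', ∀ x ∈ I, c * x ∈ I ∧ x * c ∈ I) ∧
    -- the contracted ideal is not `C`-invariant: `C(I ∩ B) ≠ (I ∩ B)C`
    (Subalgebra.toSubmodule C' * (I ⊓ Subalgebra.toSubmodule B') ≠
      (I ⊓ Subalgebra.toSubmodule B') * Subalgebra.toSubmodule C') ∧
    -- hence `C | B` is not depth two
    ¬ (LeftD2 (Subalgebra.inclusion (diagonal_le_upperTriangular k n)) ∧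
        RightD2 (Subalgebra.inclusion (diagonal_le_upperTriangular k n)))) := by
  rw [span_single_row_eq_rowSubmodule]
  have hj : (⟨1, hn⟩ : Fin n) ≠ 0 := Fin.ne_of_val_ne one_ne_zero
  refine ⟨fun x _ => isDiag_iff_forall_commute, ⟨rowSubmodule_zero_le_upperTriangular, ?_⟩,
    fun h => single_zero_notMem_mul_inf hj (by rw [h]; exact single_zero_mem_inf_mul _),
    fun h => not_rightD2_upperTriangular hn h.2⟩
  intro c hc x hx
  exact ⟨mul_mem_rowSubmodule_of_col_eq_zero
    (fun _ hp => apply_zero_eq_zero_of_mem_upperTriangular hc hp) hx, mul_mem_rowSubmodule hx c⟩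

end
end
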